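/- The level three Appell function satisfies the translation identity A₃(u, v+τ; τ) = e^{-2πiu} A₃(u, v; τ) + i e^{πiu - πiv - 3πiτ/4} θ(v; 3τ), for u, v ∈ ℂ and τ in the upper half-plane (with u avoiding the poles u ∈ ℤτ + ℤ). -/

import Mathlib

/-! Writing `z = e^{2πiu}`, `q = e^{2πiτ}` and `aₙ = (-1)ⁿ q^{3n(n+1)/2} e^{2πivn}`, the shift
`v ↦ v + τ` multiplies `aₙ` by `qⁿ`, and `qⁿ / (1 - z qⁿ) = z⁻¹ (1 / (1 - z qⁿ) - 1)`.
Hence `A₃(u, v + τ) = e^{-2πiu} A₃(u, v) - e^{πiu} ∑ aₙ`, and `∑ aₙ` is the theta series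
`θ(v; 3τ)` up to the factor `i e^{πiv + 3πiτ/4}`. Convergence of the Appell series only needs
`|1 - z qⁿ| ≥ 1/2` for all but finitely many `n`, since `z qⁿ → 0` as `n → ∞` and
`|z qⁿ| → ∞` as `n → -∞`. -/

open Complex

/-- The Jacobi theta function `θ(u; τ) = ∑_{ν ∈ 1/2 + ℤ} e^{πiν²τ + 2πiν(u + 1/2)}`. -/
noncomputable def jTheta (u τ : ℂ) : ℂ :=
  ∑' n : ℤ, Complex.exp ((Real.pi : ℂ) * I * ((n : ℂ) + 1 / 2) ^ 2 * τ
    + 2 * (Real.pi : ℂ) * I * ((n : ℂ) + 1 / 2) * (u + 1 / 2))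

/-- The level three Appell function
`A₃(u, v; τ) = e^{3πiu} ∑_{n ∈ ℤ} (-1)^n q^{3n(n+1)/2} e^{2πivn} / (1 - e^{2πiu} q^n)`,
with `q = e^{2πiτ}`. -/
noncomputable def appellA3 (u v τ : ℂ) : ℂ :=
  Complex.exp (3 * (Real.pi : ℂ) * I * u) *
    ∑' n : ℤ, ((-1 : ℂ) ^ n
        * Complex.exp (3 * (Real.pi : ℂ) * I * τ * (n : ℂ) * ((n : ℂ) + 1))
        * Complex.exp (2 * (Real.pi : ℂ) * I * v * (n : ℂ)))
      / (1 - Complex.exp (2 * (Real.pi : ℂ) * I * u) * Complex.exp (2 * (Real.pi : ℂ) * I * τ * (n : ℂ)))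

open Filter Topology
open scoped Real

lemma tendsto_zpow_atTop_nhds_zero_of_lt_one {r : ℝ} (h₀ : 0 < r) (h₁ : r < 1) :
    Tendsto (fun n : ℤ => r ^ n) atTop (𝓝 0) := by
  simpa only [Function.comp_def, Real.rpow_intCast] using
    (tendsto_rpow_atTop_of_base_lt_one r (by linarith) h₁).comp tendsto_intCast_atTop_atTop

lemma tendsto_zpow_atBot_atTop_of_lt_one {r : ℝ} (h₀ : 0 < r) (h₁ : r < 1) :
    Tendsto (fun n : ℤ => r ^ n) atBot atTop := by
  simpa only [Function.comp_def, id, Real.rpow_intCast] using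
    (tendsto_rpow_atBot_of_base_lt_one r h₀ h₁).comp (tendsto_intCast_atBot_iff.2 tendsto_id)

lemma eventually_half_le_norm_one_sub_mul_zpow {z q : ℂ} (hz : z ≠ 0) (hq₀ : q ≠ 0)
    (hq : ‖q‖ < 1) : ∀ᶠ n : ℤ in cofinite, 1 / 2 ≤ ‖1 - z * q ^ n‖ := by
  rw [Int.cofinite_eq, eventually_sup]
  constructor
  · have hgrow : Tendsto (fun n : ℤ => ‖z * q ^ n‖) atBot atTop := by
      simpa only [norm_mul, norm_zpow] using
        (tendsto_zpow_atBot_atTop_of_lt_one (norm_pos_iff.2 hq₀) hq).const_mul_atTop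
          (norm_pos_iff.2 hz)
    filter_upwards [hgrow.eventually_ge_atTop (3 / 2)] with n hn
    have := norm_sub_norm_le (z * q ^ n) 1
    rw [norm_one, norm_sub_rev] at this
    linarith
  · have hdecay : Tendsto (fun n : ℤ => 1 - z * q ^ n) atTop (𝓝 1) := by
      have hzq : Tendsto (fun n : ℤ => z * q ^ n) atTop (𝓝 0) := by
        rw [tendsto_zero_iff_norm_tendsto_zero]
        simpa only [norm_mul, norm_zpow, mul_zero] using
          (tendsto_zpow_atTop_nhds_zero_of_lt_one (norm_pos_iff.2 hq₀) hq).const_mul ‖z‖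
      simpa using hzq.const_sub 1
    filter_upwards [hdecay.norm.eventually (lt_mem_nhds (by norm_num : (1 : ℝ) / 2 < ‖(1 : ℂ)‖))]
      with n hn using hn.le

lemma summable_div_one_sub_mul_zpow {a : ℤ → ℂ} {z q : ℂ} (ha : Summable a) (hz : z ≠ 0)
    (hq₀ : q ≠ 0) (hq : ‖q‖ < 1) : Summable fun n => a n / (1 - z * q ^ n) := by
  refine (ha.norm.mul_left 2).of_norm_bounded_eventually ?_
  filter_upwards [eventually_half_le_norm_one_sub_mul_zpow hz hq₀ hq] with n hn
  rw [norm_div, div_le_iff₀ (by linarith)]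
  nlinarith [norm_nonneg (a n)]

lemma tsum_mul_div_one_sub_mul {ι : Type*} {a w : ι → ℂ} {z : ℂ} (hz : z ≠ 0)
    (hw : ∀ i, z * w i ≠ 1) (ha : Summable a) (haw : Summable fun i => a i / (1 - z * w i)) :
    ∑' i, a i * w i / (1 - z * w i) = z⁻¹ * (∑' i, a i / (1 - z * w i) - ∑' i, a i) := by
  rw [← haw.tsum_sub ha, ← tsum_mul_left]
  refine tsum_congr fun i => ?_
  have : 1 - z * w i ≠ 0 := sub_ne_zero.2 (hw i).symm
  rw [eq_inv_mul_iff_mul_eq₀ hz]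
  field_simp
  ring

lemma jacobiTheta₂_term_add_left (n : ℤ) (z w τ : ℂ) :
    jacobiTheta₂_term n (z + w) τ = jacobiTheta₂_term n z τ * exp (2 * π * I * w) ^ n := by
  rw [jacobiTheta₂_term, jacobiTheta₂_term, ← exp_int_mul, ← exp_add]
  ring_nf

lemma jTheta_eq_jacobiTheta₂ (v τ : ℂ) :
    jTheta v τ = I * exp (π * I * v + π * I * τ / 4) * jacobiTheta₂ (v + (1 + τ) / 2) τ := by
  rw [jacobiTheta₂, jTheta, ← tsum_mul_left]
  refine tsum_congr fun n => ?_
  have I_mul_exp (x : ℂ) : I * exp x = exp (π / 2 * I + x) := by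
    rw [exp_add, exp_pi_div_two_mul_I]
  rw [jacobiTheta₂_term, I_mul_exp, ← exp_add]
  ring_nf

lemma appellA3_eq_tsum (u v τ : ℂ) :
    appellA3 u v τ = exp (3 * π * I * u) * ∑' n : ℤ,
      jacobiTheta₂_term n (v + (1 + 3 * τ) / 2) (3 * τ)
        / (1 - exp (2 * π * I * u) * exp (2 * π * I * τ) ^ n) := by
  rw [appellA3]
  congr 1
  refine tsum_congr fun n => ?_
  rw [jacobiTheta₂_term, ← exp_int_mul, ← exp_pi_mul_I, ← exp_int_mul, ← exp_add, ← exp_add]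
  ring_nf

/-- `A₃(u, v+τ; τ) = e^{-2πiu} A₃(u, v; τ) + i e^{πiu - πiv - 3πiτ/4} θ(v; 3τ)`. -/
theorem appellA3_translate (u v τ : ℂ) (hτ : 0 < τ.im)
    (hu : ∀ n : ℤ, Complex.exp (2 * (Real.pi : ℂ) * I * u)
      * Complex.exp (2 * (Real.pi : ℂ) * I * τ * (n : ℂ)) ≠ 1) :
    appellA3 u (v + τ) τ
      = Complex.exp (-(2 * (Real.pi : ℂ) * I * u)) * appellA3 u v τ
        + I * Complex.exp ((Real.pi : ℂ) * I * u - (Real.pi : ℂ) * I * v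
            - 3 * (Real.pi : ℂ) * I * τ / 4) * jTheta v (3 * τ) := by
  have hq : ‖exp (2 * π * I * τ)‖ < 1 := UpperHalfPlane.norm_exp_two_pi_I_lt_one ⟨τ, hτ⟩
  have ha : Summable fun n : ℤ => jacobiTheta₂_term n (v + (1 + 3 * τ) / 2) (3 * τ) :=
    (summable_jacobiTheta₂_term_iff _ _).2 (by simpa using hτ)
  have hu' (n : ℤ) : exp (2 * π * I * u) * exp (2 * π * I * τ) ^ n ≠ 1 := by
    rw [← exp_int_mul, mul_comm (n : ℂ)]
    exact hu n
  rw [appellA3_eq_tsum, appellA3_eq_tsum, jTheta_eq_jacobiTheta₂, add_right_comm v τ]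
  simp_rw [jacobiTheta₂_term_add_left _ _ τ]
  rw [tsum_mul_div_one_sub_mul (exp_ne_zero _) hu' ha
    (summable_div_one_sub_mul_zpow ha (exp_ne_zero _) (exp_ne_zero _) hq), ← jacobiTheta₂]
  have hexp : exp (3 * π * I * u) * (exp (2 * π * I * u))⁻¹
      = exp (π * I * u - π * I * v - 3 * π * I * τ / 4)
        * exp (π * I * v + π * I * (3 * τ) / 4) := by
    rw [← exp_neg, ← exp_add, ← exp_add]
    ring_nf
  set θ := jacobiTheta₂ (v + (1 + 3 * τ) / 2) (3 * τ)
  rw [exp_neg]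
  linear_combination (-θ) * hexp - exp (π * I * u - π * I * v - 3 * π * I * τ / 4)
    * exp (π * I * v + π * I * (3 * τ) / 4) * θ * I_mul_I
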